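/- arXiv:2007.06367 — 2 statements merged into one kernel-verified Lean document; each statement's English description precedes it below -/
import Mathlib

section
/- For any integer n ≥ 1 and any vector z ∈ {0,...,n-1}^s with s ≥ 2, there exists a nonzero integer vector h* = (h₁*, h₂*, 0, ..., 0) with |h₁*| ≤ ⌊√n⌋ and |h₂*| ≤ ⌊√n⌋ such that h* · z ≡ 0 (mod n). -/
/-- For any integer `n ≥ 1` and any `z ∈ {0,…,n-1}^s` with `s ≥ 2`, there exists a
nonzero integer vector `h* = (h₁*, h₂*, 0, …, 0)` with `|hᵢ*| ≤ ⌊√n⌋` such that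
`h* ⬝ z ≡ 0 (mod n)`. -/
theorem stmt0 (n s : ℕ) (hn : 1 ≤ n) (hs : 2 ≤ s) (z : Fin s → ℤ)
    (hz : ∀ j, 0 ≤ z j ∧ z j < n) :
    ∃ h : Fin s → ℤ, h ≠ 0 ∧
      (∀ j : Fin s, 2 ≤ (j : ℕ) → h j = 0) ∧
      |h ⟨0, by omega⟩| ≤ (Nat.sqrt n : ℤ) ∧ |h ⟨1, by omega⟩| ≤ (Nat.sqrt n : ℤ) ∧
      (n : ℤ) ∣ ∑ j, h j * z j := by
  haveI : NeZero n := ⟨by omega⟩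
  set N := Nat.sqrt n with hN
  set i0 : Fin s := ⟨0, by omega⟩ with hi0
  set i1 : Fin s := ⟨1, by omega⟩ with hi1
  set S : Finset (ℕ × ℕ) := Finset.range (N + 1) ×ˢ Finset.range (N + 1) with hS
  set f : ℕ × ℕ → ZMod n := fun p => (((p.1 : ℤ) * z i0 + (p.2 : ℤ) * z i1 : ℤ) : ZMod n)
  have hcard : (Finset.univ : Finset (ZMod n)).card < S.card := by
    rw [hS, Finset.card_product, Finset.card_range, Finset.card_univ, ZMod.card]
    nlinarith [Nat.lt_succ_sqrt n]
  obtain ⟨p, hp, q, hq, hpq, hfpq⟩ :=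
    Finset.exists_ne_map_eq_of_card_lt_of_maps_to hcard
      (fun x _ => Finset.mem_univ (f x))
  simp only [hS, Finset.mem_product, Finset.mem_range] at hp hq
  refine ⟨fun j => if (j : ℕ) = 0 then (p.1 : ℤ) - q.1
      else if (j : ℕ) = 1 then (p.2 : ℤ) - q.2 else 0, ?_, ?_, ?_, ?_, ?_⟩
  · intro hcontra
    have h0 := congrFun hcontra i0
    have h1 := congrFun hcontra i1
    simp [hi0, hi1] at h0 h1
    exact hpq (Prod.ext (by omega) (by omega))
  · intro j hj
    simp only
    rw [if_neg (by omega), if_neg (by omega)]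
  · have hb : |(p.1 : ℤ) - q.1| ≤ (N : ℤ) :=
      abs_le.mpr ⟨by push_cast; omega, by push_cast; omega⟩
    simpa [hi0] using hb
  · have hb : |(p.2 : ℤ) - q.2| ≤ (N : ℤ) :=
      abs_le.mpr ⟨by push_cast; omega, by push_cast; omega⟩
    simpa [hi1] using hb
  · have hdvd : (n : ℤ) ∣ ((p.1 : ℤ) * z i0 + (p.2 : ℤ) * z i1)
        - ((q.1 : ℤ) * z i0 + (q.2 : ℤ) * z i1) := by
      rw [← ZMod.intCast_zmod_eq_zero_iff_dvd]
      push_cast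
      have h := hfpq
      simp only [f] at h
      push_cast at h
      linear_combination h
    have hsum : ∑ j : Fin s, (if (j : ℕ) = 0 then (p.1 : ℤ) - q.1
        else if (j : ℕ) = 1 then (p.2 : ℤ) - q.2 else 0) * z j
        = ((p.1 : ℤ) - q.1) * z i0 + ((p.2 : ℤ) - q.2) * z i1 := by
      rw [Fintype.sum_eq_add i0 i1 (by rw [hi0, hi1]; intro h; exact absurd (congrArg Fin.val h) (by norm_num)) ?_]
      · simp [hi0, hi1]
      · rintro k ⟨hk0, hk1⟩
        have e0 : (k : ℕ) ≠ 0 := fun h => hk0 (by rw [hi0]; exact Fin.ext h)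
        have e1 : (k : ℕ) ≠ 1 := fun h => hk1 (by rw [hi1]; exact Fin.ext h)
        rw [if_neg e0, if_neg e1, zero_mul]
    rw [hsum]
    convert hdvd using 1
    ring
end

section
/- Let H be a reproducing kernel Hilbert space of functions on a set X with kernel K, let t₁,...,t_n ∈ X, and let W be a normed space containing H with ‖·‖_W ≤ C‖·‖_H pointwise meaningful. Let A_n : H → W be any map such that A_n(f) depends on f only through the values (f(t₁),...,f(t_n)). Let A*_n(f) denote the minimal-norm interpolant of f at t₁,...,t_n (the H-orthogonal projection onto span{K(t_k,·)}). Then the worst case error of A*_n over the unit ball of H in the W-norm is at most that of A_n: sup_{‖f‖_H ≤ 1} ‖f − A*_n(f)‖_W ≤ sup_{‖f‖_H ≤ 1} ‖f − A_n(f)‖_W. -/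
open scoped ENNReal

/-- In an RKHS `H` on `X` with kernel sections `k x` (so `f x = ⟨f, k x⟩`), the kernel
interpolant `A*_n f` (orthogonal projection onto `span{k(t_i)}`) has worst case error,
in the norm of an ambient normed space `W ⊇ H`, no larger than that of any algorithm
`A_n` using only the function values at the points `t_1, …, t_n`. -/
theorem stmt3 {X H W : Type*} [NormedAddCommGroup H] [InnerProductSpace ℝ H]
    [NormedAddCommGroup W] [NormedSpace ℝ W]
    (val : H →ₗ[ℝ] (X → ℝ)) (k : X → H)
    (hrepro : ∀ (f : H) (x : X), val f x = inner ℝ f (k x))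
    (n : ℕ) (t : Fin n → X)
    [Submodule.HasOrthogonalProjection (Submodule.span ℝ (Set.range fun i => k (t i)))]
    (ι : H →ₗ[ℝ] W) (C : ℝ) (hι : ∀ f : H, ‖ι f‖ ≤ C * ‖f‖)
    (A : H → W) (info : (Fin n → ℝ) → W)
    (hA : ∀ f : H, A f = info fun i => val f (t i))
    (Astar : H → H)
    (hAstar : ∀ f : H, Astar f =
      (Submodule.orthogonalProjectionOnto (Submodule.span ℝ (Set.range fun i => k (t i))) f : H)) :
    (⨆ f : {f : H // ‖f‖ ≤ 1}, (‖ι (f : H) - ι (Astar f)‖₊ : ℝ≥0∞)) ≤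
      ⨆ f : {f : H // ‖f‖ ≤ 1}, (‖ι (f : H) - A f‖₊ : ℝ≥0∞) := by
  set S := Submodule.span ℝ (Set.range fun i => k (t i)) with hS
  apply iSup_le
  rintro ⟨f, hf⟩
  set g : H := f - (S.orthogonalProjectionOnto f : H) with hg
  have hgmem : g ∈ Sᗮ := S.sub_starProjection_mem_orthogonal f
  -- ‖g‖ ≤ 1
  have hgnorm : ‖g‖ ≤ 1 := by
    have h1 : ‖f - (S.orthogonalProjectionOnto f : H)‖ ≤ ‖f - ((⟨0, S.zero_mem⟩ : S) : H)‖ := by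
      rw [← Submodule.starProjection_apply, Submodule.starProjection_minimal]
      exact ciInf_le ⟨0, by rintro x ⟨u, rfl⟩; positivity⟩ _
    simpa [hg] using h1.trans (by simpa using hf)
  have hgnorm' : ‖-g‖ ≤ 1 := by simpa using hgnorm
  -- g vanishes at the points
  have hval : ∀ i, val g (t i) = 0 := by
    intro i
    rw [hrepro]
    have hk : k (t i) ∈ S := Submodule.subset_span ⟨i, rfl⟩
    rw [real_inner_comm]
    exact hgmem (k (t i)) hk
  have hAg : A g = info fun _ => 0 := by
    rw [hA]; congr 1; funext i; exact hval i
  have hAng : A (-g) = info fun _ => 0 := by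
    rw [hA]; congr 1; funext i; simp [map_neg, hval i]
  -- the term equals ι g
  have hterm : ι f - ι (Astar f) = ι g := by
    rw [hAstar, ← map_sub]
  -- key symmetrization bound
  have h2 : (2 : ℝ) • ι g = (ι g - A g) - (ι (-g) - A (-g)) := by
    rw [hAg, hAng, map_neg, two_smul]
    abel
  have hkey : ‖ι g‖ ≤ max ‖ι g - A g‖ ‖ι (-g) - A (-g)‖ := by
    have hn : (2 : ℝ) * ‖ι g‖ ≤ ‖ι g - A g‖ + ‖ι (-g) - A (-g)‖ := by
      calc (2 : ℝ) * ‖ι g‖ = ‖(2 : ℝ) • ι g‖ := by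
            rw [norm_smul]; simp
        _ ≤ _ := by rw [h2]; exact norm_sub_le _ _
    rcases le_max_iff.mpr (Or.inl (le_refl ‖ι g - A g‖)) with _
    have := le_max_left ‖ι g - A g‖ ‖ι (-g) - A (-g)‖
    have := le_max_right ‖ι g - A g‖ ‖ι (-g) - A (-g)‖
    linarith [le_max_left ‖ι g - A g‖ ‖ι (-g) - A (-g)‖,
      le_max_right ‖ι g - A g‖ ‖ι (-g) - A (-g)‖]
  rw [hterm]
  have hkey' : ‖ι g‖₊ ≤ max ‖ι g - A g‖₊ ‖ι (-g) - A (-g)‖₊ := by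
    rw [← NNReal.coe_le_coe]
    push_cast
    exact hkey
  calc (‖ι g‖₊ : ℝ≥0∞) ≤ max (‖ι g - A g‖₊ : ℝ≥0∞) (‖ι (-g) - A (-g)‖₊ : ℝ≥0∞) := by
        exact_mod_cast hkey'
    _ ≤ _ := max_le (le_iSup_of_le ⟨g, hgnorm⟩ le_rfl) (le_iSup_of_le ⟨-g, hgnorm'⟩ le_rfl)
end
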